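/- Let (T_p)_{p∈ℤ} ⊆ ℝ[Z,W] be defined by T₀ = 3, T₁ = 3Z, T₂ = 9Z² − 6W and T_{p+3} = 3Z·T_{p+2} − 3W·T_{p+1} + T_p for all p ∈ ℤ. Then for every λ ∈ ℝ and every integer p ≥ 1, L_λ T_p = −(p/2)((3 − λ)p + 3(λ − 1)) T_p − ((λ − 1)p/2) Σ_{i=1}^{p−1} T_i T_{p−i}. Equivalently, writing λ = (6α+5)/2, L_λ T_p = −(p/4)(p(1 − 6α) + 9(2α + 1)) T_p − (3p/4)(2α + 1) Σ_{i=1}^{p−1} T_i T_{p−i}. -/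

import Mathlib

noncomputable section

open MvPolynomial

/-- The deltoid operator `L_λ` on `ℝ[Z,W]`, with `Z = X 0` and `W = X 1`. -/
def Lop (lam : ℝ) (f : MvPolynomial (Fin 2) ℝ) : MvPolynomial (Fin 2) ℝ :=
  (X 1 - (X 0) ^ 2) * pderiv 0 (pderiv 0 f)
    + (1 - X 0 * X 1) * pderiv 0 (pderiv 1 f)
    + (X 0 - (X 1) ^ 2) * pderiv 1 (pderiv 1 f)
    - C lam * X 0 * pderiv 0 f
    - C lam * X 1 * pderiv 1 f

/-!
`T_p` is the power sum `x₁ᵖ + x₂ᵖ + x₃ᵖ` of the roots of `t³ - 3Z t² + 3W t - 1`, and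
`completeHomogeneous k` is the complete homogeneous symmetric polynomial `h_k` of the same
roots. Writing `L_λ = L_1 + (1 - λ) E` with the Euler operator `E = Z ∂_Z + W ∂_W`, the theorem
splits into
* `L_1 T_p = -p² T_p`, which follows from the recurrence once the carré du champ values
  `Γ(Z, T_p)` and `Γ(W, T_p)` are known;
* `E T_p = p (h_p - h_{p-3})`, because `∂_Z T_p = 3p h_{p-1}` and `∂_W T_p = -3p h_{p-2}`;
* `2 (h_p - h_{p-3}) = (3 - p) T_p + ∑_{i=1}^{p-1} T_i T_{p-i}`.
Each identity is proved by induction on `p` in steps of three, both sides obeying the same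
recurrence.
-/

@[elab_as_elim]
theorem Int.le_induction_three {m : ℤ} {P : ∀ n, m ≤ n → Prop} (h₀ : P m le_rfl)
    (h₁ : P (m + 1) (by omega)) (h₂ : P (m + 2) (by omega))
    (step : ∀ n hn, P n hn → P (n + 1) (by omega) → P (n + 2) (by omega) →
      P (n + 3) (by omega)) :
    ∀ n hn, P n hn := by
  suffices ∀ n hn, P n hn ∧ P (n + 1) (by omega) ∧ P (n + 2) (by omega) from
    fun n hn => (this n hn).1
  intro n hn
  induction n, hn using Int.leInduction with
  | base => exact ⟨h₀, h₁, h₂⟩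
  | succ n hn ih =>
    obtain ⟨h₀, h₁, h₂⟩ := ih
    refine ⟨h₁, ?_, ?_⟩
    · convert h₂ using 1; omega
    · convert step n hn h₀ h₁ h₂ using 1; omega

theorem Finset.sum_Icc_add_one_top {M : Type*} [AddCommMonoid M] {a b : ℤ} (hab : a ≤ b + 1)
    (f : ℤ → M) : ∑ i ∈ Icc a (b + 1), f i = ∑ i ∈ Icc a b, f i + f (b + 1) := by
  rw [← insert_Icc_right_eq_Icc_add_one hab, sum_insert (by simp), add_comm]

@[simp]
theorem Derivation.map_ofNat {R A M : Type*} [CommSemiring R] [CommSemiring A] [AddCommMonoid M]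
    [Algebra R A] [Module A M] [Module R M] (D : Derivation R A M) (n : ℕ) [n.AtLeastTwo] :
    D (no_index (OfNat.ofNat n : A)) = 0 :=
  D.map_natCast n

section

variable {R : Type*} [CommRing R]

def eulerOp (f : MvPolynomial (Fin 2) R) : MvPolynomial (Fin 2) R :=
  X 0 * pderiv 0 f + X 1 * pderiv 1 f

/-- Twice the carré du champ `Γ(Z, f)` of `L_λ`. -/
def gammaZ (f : MvPolynomial (Fin 2) R) : MvPolynomial (Fin 2) R :=
  2 * (X 1 - X 0 ^ 2) * pderiv 0 f + (1 - X 0 * X 1) * pderiv 1 f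

/-- Twice the carré du champ `Γ(W, f)` of `L_λ`. -/
def gammaW (f : MvPolynomial (Fin 2) R) : MvPolynomial (Fin 2) R :=
  (1 - X 0 * X 1) * pderiv 0 f + 2 * (X 0 - X 1 ^ 2) * pderiv 1 f

/-- The value `1` at `k = -3` (rather than `0`) makes the recurrence
`h_{k+3} = 3Z h_{k+2} - 3W h_{k+1} + h_k` hold for all `k ≥ -3`. -/
def completeHomogeneous (k : ℤ) : MvPolynomial (Fin 2) R :=
  if k < 0 then if k = -3 then 1 else 0
  else 3 * X 0 * completeHomogeneous (k - 1) - 3 * X 1 * completeHomogeneous (k - 2)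
    + completeHomogeneous (k - 3)
termination_by (k + 3).toNat
decreasing_by all_goals omega

theorem completeHomogeneous_add_three {k : ℤ} (hk : -3 ≤ k) :
    (completeHomogeneous (k + 3) : MvPolynomial (Fin 2) R) = 3 * X 0 * completeHomogeneous (k + 2)
      - 3 * X 1 * completeHomogeneous (k + 1) + completeHomogeneous k := by
  rw [completeHomogeneous, if_neg (by omega)]
  ring_nf

structure IsDeltoidPowerSum (T : ℤ → MvPolynomial (Fin 2) R) : Prop where
  zero : T 0 = 3
  one : T 1 = 3 * X 0
  two : T 2 = 9 * X 0 ^ 2 - 6 * X 1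
  add_three (p : ℤ) : T (p + 3) = 3 * X 0 * T (p + 2) - 3 * X 1 * T (p + 1) + T p

def selfConv (T : ℤ → MvPolynomial (Fin 2) R) (p : ℤ) : MvPolynomial (Fin 2) R :=
  ∑ i ∈ Finset.Icc 1 (p - 1), T i * T (p - i)

namespace IsDeltoidPowerSum

variable {T : ℤ → MvPolynomial (Fin 2) R}

theorem three (hT : IsDeltoidPowerSum T) : T 3 = 27 * X 0 ^ 3 - 27 * X 0 * X 1 + 3 := by
  have h := hT.add_three 0
  norm_num [hT.zero, hT.one, hT.two] at h
  linear_combination h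

theorem pderiv_zero_add_three (hT : IsDeltoidPowerSum T) (p : ℤ) :
    pderiv 0 (T (p + 3)) = 3 * X 0 * pderiv 0 (T (p + 2)) - 3 * X 1 * pderiv 0 (T (p + 1))
      + pderiv 0 (T p) + 3 * T (p + 2) := by
  rw [hT.add_three]
  simp
  ring

theorem pderiv_one_add_three (hT : IsDeltoidPowerSum T) (p : ℤ) :
    pderiv 1 (T (p + 3)) = 3 * X 0 * pderiv 1 (T (p + 2)) - 3 * X 1 * pderiv 1 (T (p + 1))
      + pderiv 1 (T p) - 3 * T (p + 1) := by
  rw [hT.add_three]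
  simp
  ring

theorem eq_completeHomogeneous (hT : IsDeltoidPowerSum T) {p : ℤ} (hp : 0 ≤ p) :
    T p = 3 * X 0 * completeHomogeneous (p - 1) - 6 * X 1 * completeHomogeneous (p - 2)
      + 3 * completeHomogeneous (p - 3) := by
  induction p, hp using Int.le_induction_three with
  | h₀ => simp [hT.zero, completeHomogeneous]
  | h₁ => simp [hT.one, completeHomogeneous]
  | h₂ => simp [hT.two, completeHomogeneous]; ring
  | step p hp ih₀ ih₁ ih₂ =>
    have h₁ := completeHomogeneous_add_three (R := R) (k := p - 1) (by omega)
    have h₂ := completeHomogeneous_add_three (R := R) (k := p - 2) (by omega)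
    have h₃ := completeHomogeneous_add_three (R := R) (k := p - 3) (by omega)
    linear_combination (norm := ring_nf) hT.add_three p + 3 * X 0 * ih₂ - 3 * X 1 * ih₁ + ih₀
      - 3 * X 0 * h₁ + 6 * X 1 * h₂ - 3 * h₃

theorem pderiv_zero_eq (hT : IsDeltoidPowerSum T) {p : ℤ} (hp : 0 ≤ p) :
    pderiv 0 (T p) = 3 * (p : MvPolynomial (Fin 2) R) * completeHomogeneous (p - 1) := by
  induction p, hp using Int.le_induction_three with
  | h₀ => simp [hT.zero]
  | h₁ => simp [hT.one, completeHomogeneous]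
  | h₂ => simp [hT.two, completeHomogeneous]; ring
  | step p hp ih₀ ih₁ ih₂ =>
    have hT₂ := hT.eq_completeHomogeneous (p := p + 2) (by omega)
    have h₁ := completeHomogeneous_add_three (R := R) (k := p - 1) (by omega)
    linear_combination (norm := (push_cast; ring_nf)) hT.pderiv_zero_add_three p
      + 3 * X 0 * ih₂ - 3 * X 1 * ih₁ + ih₀ + 3 * hT₂
      - 3 * ((p : MvPolynomial (Fin 2) R) + 3) * h₁

theorem pderiv_one_eq (hT : IsDeltoidPowerSum T) {p : ℤ} (hp : 0 ≤ p) :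
    pderiv 1 (T p) = -(3 * (p : MvPolynomial (Fin 2) R) * completeHomogeneous (p - 2)) := by
  induction p, hp using Int.le_induction_three with
  | h₀ => simp [hT.zero]
  | h₁ => simp [hT.one, completeHomogeneous]
  | h₂ => simp [hT.two, completeHomogeneous]; ring
  | step p hp ih₀ ih₁ ih₂ =>
    have hT₁ := hT.eq_completeHomogeneous (p := p + 1) (by omega)
    have h₂ := completeHomogeneous_add_three (R := R) (k := p - 2) (by omega)
    linear_combination (norm := (push_cast; ring_nf)) hT.pderiv_one_add_three p
      + 3 * X 0 * ih₂ - 3 * X 1 * ih₁ + ih₀ - 3 * hT₁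
      + 3 * ((p : MvPolynomial (Fin 2) R) + 3) * h₂

theorem eulerOp_eq (hT : IsDeltoidPowerSum T) {p : ℤ} (hp : 0 ≤ p) :
    eulerOp (T p)
      = (p : MvPolynomial (Fin 2) R) * (completeHomogeneous p - completeHomogeneous (p - 3)) := by
  have h := completeHomogeneous_add_three (R := R) (k := p - 3) (by omega)
  rw [eulerOp, hT.pderiv_zero_eq hp, hT.pderiv_one_eq hp]
  linear_combination (norm := ring_nf) -(p : MvPolynomial (Fin 2) R) * h

theorem gammaZ_eq (hT : IsDeltoidPowerSum T) {p : ℤ} (hp : 0 ≤ p) :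
    gammaZ (T p) = (p : MvPolynomial (Fin 2) R) * (X 0 * T p - T (p + 1)) := by
  unfold gammaZ
  induction p, hp using Int.le_induction_three with
  | h₀ => simp [hT.zero]
  | h₁ => simp [hT.one, hT.two]; ring
  | h₂ => simp [hT.two, hT.three]; ring
  | step p hp ih₀ ih₁ ih₂ =>
    linear_combination (norm := (push_cast; ring_nf))
      2 * (X 1 - X 0 ^ 2) * hT.pderiv_zero_add_three p
      + (1 - X 0 * X 1) * hT.pderiv_one_add_three p + 3 * X 0 * ih₂ - 3 * X 1 * ih₁ + ih₀
      + ((p : MvPolynomial (Fin 2) R) + 3) * hT.add_three (p + 1)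
      - (p : MvPolynomial (Fin 2) R) * X 0 * hT.add_three p

theorem gammaW_eq (hT : IsDeltoidPowerSum T) {p : ℤ} (hp : 0 ≤ p) :
    gammaW (T p) = (p : MvPolynomial (Fin 2) R) * (T (p - 1) - X 1 * T p) := by
  unfold gammaW
  induction p, hp using Int.le_induction_three with
  | h₀ => simp [hT.zero]
  | h₁ => simp [hT.zero, hT.one]; ring
  | h₂ => simp [hT.one, hT.two]; ring
  | step p hp ih₀ ih₁ ih₂ =>
    linear_combination (norm := (push_cast; ring_nf))
      (1 - X 0 * X 1) * hT.pderiv_zero_add_three p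
      + 2 * (X 0 - X 1 ^ 2) * hT.pderiv_one_add_three p + 3 * X 0 * ih₂ - 3 * X 1 * ih₁ + ih₀
      + ((p : MvPolynomial (Fin 2) R) + 3) * X 1 * hT.add_three p
      - (p : MvPolynomial (Fin 2) R) * hT.add_three (p - 1)

theorem selfConv_add_three (hT : IsDeltoidPowerSum T) {p : ℤ} (hp : 1 ≤ p) :
    selfConv T (p + 3) = 3 * X 0 * selfConv T (p + 2) - 3 * X 1 * selfConv T (p + 1)
      + selfConv T p + 3 * X 0 * T (p + 2) - 6 * X 1 * T (p + 1) + 3 * T p := by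
  have peel (f : ℤ → MvPolynomial (Fin 2) R) (q : ℤ) (hq : 0 ≤ q) :
      ∑ i ∈ Finset.Icc 1 (q + 1), f i = ∑ i ∈ Finset.Icc 1 q, f i + f (q + 1) :=
    Finset.sum_Icc_add_one_top (by omega) f
  have termwise : ∑ i ∈ Finset.Icc 1 (p - 1), T i * T (p + 3 - i)
      = 3 * X 0 * ∑ i ∈ Finset.Icc 1 (p - 1), T i * T (p + 2 - i)
        - 3 * X 1 * ∑ i ∈ Finset.Icc 1 (p - 1), T i * T (p + 1 - i)
        + ∑ i ∈ Finset.Icc 1 (p - 1), T i * T (p - i) := by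
    simp only [Finset.mul_sum, ← Finset.sum_sub_distrib, ← Finset.sum_add_distrib]
    refine Finset.sum_congr rfl fun i _ => ?_
    linear_combination (norm := ring_nf) T i * hT.add_three (p - i)
  -- Peeled off the top, all four sums run over `Icc 1 (p - 1)`, and the peeled terms involve
  -- only `T 1`, `T 2`, `T 3` besides `T p`, `T (p + 1)`, `T (p + 2)`.
  unfold selfConv
  rw [show p + 3 - 1 = p - 1 + 1 + 1 + 1 by ring, peel _ _ (by omega), peel _ _ (by omega),
    peel _ _ (by omega), show p + 2 - 1 = p - 1 + 1 + 1 by ring, peel _ _ (by omega),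
    peel _ _ (by omega), show p + 1 - 1 = p - 1 + 1 by ring, peel _ _ (by omega)]
  linear_combination (norm := ring_nf) termwise + T p * hT.three
    + T (p + 1) * hT.two + T (p + 2) * hT.one - 3 * X 0 * T p * hT.two
    - 3 * X 0 * T (p + 1) * hT.one + 3 * X 1 * T p * hT.one

theorem two_mul_completeHomogeneous_sub (hT : IsDeltoidPowerSum T) {p : ℤ} (hp : 1 ≤ p) :
    2 * (completeHomogeneous p - completeHomogeneous (p - 3))
      = (3 - (p : MvPolynomial (Fin 2) R)) * T p + selfConv T p := by
  induction p, hp using Int.le_induction_three with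
  | h₀ => simp [hT.one, selfConv, completeHomogeneous]; ring
  | h₁ => simp [hT.one, hT.two, selfConv, completeHomogeneous]; ring
  | h₂ => simp [hT.one, hT.two, selfConv, completeHomogeneous, Finset.Icc_ofNat_ofNat]; ring
  | step p hp ih₀ ih₁ ih₂ =>
    have h₀ := completeHomogeneous_add_three (R := R) (k := p) (by omega)
    have h₃ := completeHomogeneous_add_three (R := R) (k := p - 3) (by omega)
    linear_combination (norm := (push_cast; ring_nf)) 2 * h₀ - 2 * h₃ + 3 * X 0 * ih₂
      - 3 * X 1 * ih₁ + ih₀ - hT.selfConv_add_three hp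
      + (p : MvPolynomial (Fin 2) R) * hT.add_three p

end IsDeltoidPowerSum

end

theorem Lop_eq_Lop_one_add (lam : ℝ) (f : MvPolynomial (Fin 2) ℝ) :
    Lop lam f = Lop 1 f + C (1 - lam) * eulerOp f := by
  simp only [Lop, eulerOp, map_one, map_sub]
  ring

theorem Lop_recurrence (lam : ℝ) (f g k : MvPolynomial (Fin 2) ℝ) :
    Lop lam (3 * X 0 * f - 3 * X 1 * g + k)
      = 3 * X 0 * Lop lam f - 3 * X 1 * Lop lam g + Lop lam k
        - 3 * C lam * X 0 * f + 3 * C lam * X 1 * g + 3 * gammaZ f - 3 * gammaW g := by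
  simp [Lop, gammaZ, gammaW]
  ring

theorem IsDeltoidPowerSum.Lop_one_eq {T : ℤ → MvPolynomial (Fin 2) ℝ}
    (hT : IsDeltoidPowerSum T) {p : ℤ} (hp : 0 ≤ p) :
    Lop 1 (T p) = -(p : MvPolynomial (Fin 2) ℝ) ^ 2 * T p := by
  induction p, hp using Int.le_induction_three with
  | h₀ => simp [Lop, hT.zero]
  | h₁ => simp [Lop, hT.one]; ring
  | h₂ => simp [Lop, hT.two]; ring
  | step p hp ih₀ ih₁ ih₂ =>
    have hc := Lop_recurrence 1 (T (p + 2)) (T (p + 1)) (T p)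
    rw [← hT.add_three, map_one] at hc
    linear_combination (norm := (push_cast; ring_nf)) hc + 3 * X 0 * ih₂ - 3 * X 1 * ih₁ + ih₀
      + 3 * hT.gammaZ_eq (p := p + 2) (by omega) - 3 * hT.gammaW_eq (p := p + 1) (by omega)
      + ((p : MvPolynomial (Fin 2) ℝ) ^ 2 + 3 * p + 3) * hT.add_three p

theorem stmt_11 (lam : ℝ) (T : ℤ → MvPolynomial (Fin 2) ℝ)
    (hT0 : T 0 = 3) (hT1 : T 1 = 3 * X 0) (hT2 : T 2 = 9 * (X 0) ^ 2 - 6 * X 1)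
    (hrec : ∀ p : ℤ, T (p + 3) = 3 * X 0 * T (p + 2) - 3 * X 1 * T (p + 1) + T p) :
    ∀ p : ℤ, 1 ≤ p →
      (Lop lam (T p)
        = C (-((p : ℝ) / 2) * ((3 - lam) * p + 3 * (lam - 1))) * T p
          + C (-((lam - 1) * p / 2)) * ∑ i ∈ Finset.Icc (1 : ℤ) (p - 1), T i * T (p - i)) ∧
      (∀ α : ℝ, lam = (6 * α + 5) / 2 →
        Lop lam (T p)
          = C (-((p : ℝ) / 4) * (p * (1 - 6 * α) + 9 * (2 * α + 1))) * T p
            + C (-(3 * (p : ℝ) / 4 * (2 * α + 1))) *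
                ∑ i ∈ Finset.Icc (1 : ℤ) (p - 1), T i * T (p - i)) := by
  have hT : IsDeltoidPowerSum T := ⟨hT0, hT1, hT2, hrec⟩
  intro p hp
  have main : Lop lam (T p) = C (-((p : ℝ) / 2) * ((3 - lam) * p + 3 * (lam - 1))) * T p
      + C (-((lam - 1) * p / 2)) * selfConv T p := by
    have hL := Lop_eq_Lop_one_add lam (T p)
    have hL₁ := hT.Lop_one_eq (p := p) (by omega)
    have hE := hT.eulerOp_eq (p := p) (by omega)
    have hS := hT.two_mul_completeHomogeneous_sub hp
    -- In `ℝ`-scalar form `module` can divide `hS` by `2`.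
    simp only [C_mul', ← map_intCast (algebraMap ℝ (MvPolynomial (Fin 2) ℝ)),
      ← map_ofNat (algebraMap ℝ (MvPolynomial (Fin 2) ℝ)), ← map_pow, ← map_neg,
      ← map_sub, ← Algebra.smul_def] at hL hL₁ hE hS ⊢
    rw [hL, hL₁, hE]
    linear_combination (norm := module) ((1 - lam) * p / 2) • hS
  refine ⟨main, fun α hα => ?_⟩
  rw [main, hα]
  congr 3 <;> ring
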